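/- Every 1-Sperner hypergraph H = (V, E) with V ≠ ∅ is 1-decomposable; that is, there exist a vertex z ∈ V, a partition V = {z} ∪ V1 ∪ V2, and 1-Sperner hypergraphs H1 = (V1, E1) and H2 = (V2, E2) such that H = H1 ⊙ H2 with gluing vertex z. -/

import Mathlib

open Finset

/-- A hypergraph with hyperedge set `E` is 1-Sperner if every two distinct
hyperedges `e, f` satisfy `min |e \ f| |f \ e| = 1`. -/
def OneSperner {α : Type*} [DecidableEq α] (E : Finset (Finset α)) : Prop :=
  ∀ e ∈ E, ∀ f ∈ E, e ≠ f → min (e \ f).card (f \ e).card = 1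

/-- The hyperedge set of the gluing of `(V1, E1)` and `(V2, E2)` with new vertex `z`. -/
def glueEdges {α : Type*} [DecidableEq α] (z : α) (V1 : Finset α)
    (E1 E2 : Finset (Finset α)) : Finset (Finset α) :=
  E1.image (fun e => insert z e) ∪ E2.image (fun e => V1 ∪ e)

/-!
A vertex `z` can serve as the gluing vertex whenever every hyperedge `e ∋ z` satisfies
`e \ {z} ⊆ f` for every hyperedge `f ∌ z`: then `H₁` is the link of `z`, `V₁` is the union
of its hyperedges, and `H₂` consists of the hyperedges avoiding `z` with `V₁` removed;
removing a common subset changes no difference `e \ f`, so both parts stay 1-Sperner.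

To find such a `z`, take a hyperedge `m` of minimum size and a hyperedge `g ≠ m` of maximum
size among the others, and let `z` be the unique element of `m \ g`. If some `e ∋ z` and
`f ∌ z` violated the condition, then `|f \ e| = 1`, and this forces `f ⊆ g`, contradicting
that a 1-Sperner family is an antichain.
-/

section

variable {α : Type*} [DecidableEq α]

lemma Finset.sdiff_singleton_subset_of_card_sdiff_eq_one {s t : Finset α} {a : α}
    (hst : (s \ t).card = 1) (ha : a ∈ s \ t) : s \ {a} ⊆ t := by
  intro x hx
  by_contra hxt
  obtain ⟨hxs, hxa⟩ := mem_sdiff.mp hx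
  exact hxa (mem_singleton.mpr (card_le_one.mp hst.le x (mem_sdiff.mpr ⟨hxs, hxt⟩) a ha))

lemma Finset.image_union_image_sdiff {F : Finset (Finset α)} {c : Finset α}
    (hc : ∀ e ∈ F, c ⊆ e) : (F.image (· \ c)).image (c ∪ ·) = F := by
  rw [image_image]
  exact (image_congr fun e he => union_sdiff_of_subset (hc e he)).trans image_id'

def IsGluingVertex (E : Finset (Finset α)) (z : α) : Prop :=
  ∀ e ∈ E, ∀ f ∈ E, z ∈ e → z ∉ f → e \ {z} ⊆ f

lemma isGluingVertex_of_subsingleton {E : Finset (Finset α)}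
    (hE : (E : Set (Finset α)).Subsingleton) (z : α) : IsGluingVertex E z := by
  rintro e he f hf hze hzf
  exact absurd (hE he hf ▸ hze) hzf

namespace OneSperner

variable {E F : Finset (Finset α)} {e f m g : Finset α} {z : α}

lemma mono (h : OneSperner E) (hFE : F ⊆ E) : OneSperner F :=
  fun e he f hf => h e (hFE he) f (hFE hf)

lemma image_sdiff (h : OneSperner E) {c : Finset α} (hc : ∀ e ∈ E, c ⊆ e) :
    OneSperner (E.image (· \ c)) := by
  simp only [OneSperner, mem_image, forall_exists_index, and_imp]
  rintro _ e he rfl _ f hf rfl hef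
  rw [sdiff_sdiff_sdiff_cancel_right (hc f hf), sdiff_sdiff_sdiff_cancel_right (hc e he)]
  exact h e he f hf (by rintro rfl; exact hef rfl)

lemma card_sdiff_eq_one_or (h : OneSperner E) (he : e ∈ E) (hf : f ∈ E) (hef : e ≠ f) :
    (e \ f).card = 1 ∨ (f \ e).card = 1 := by
  have := h e he f hf hef
  omega

lemma eq_of_subset (h : OneSperner E) (he : e ∈ E) (hf : f ∈ E) (hef : e ⊆ f) : e = f := by
  by_contra hne
  simpa [sdiff_eq_empty_iff_subset.mpr hef] using h e he f hf hne

lemma card_sdiff_eq_one_of_card_le (h : OneSperner E) (he : e ∈ E) (hf : f ∈ E) (hef : e ≠ f)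
    (hcard : e.card ≤ f.card) : (e \ f).card = 1 := by
  rw [← h e he f hf hef, eq_comm, min_eq_left_iff]
  exact card_sdiff_le_card_sdiff_iff.mpr hcard

lemma sdiff_singleton_subset_of_card_le (h : OneSperner E) (he : e ∈ E) (hf : f ∈ E)
    (hze : z ∈ e) (hzf : z ∉ f) (hcard : e.card ≤ f.card) : e \ {z} ⊆ f :=
  sdiff_singleton_subset_of_card_sdiff_eq_one
    (h.card_sdiff_eq_one_of_card_le he hf (by rintro rfl; exact hzf hze) hcard)
    (mem_sdiff.mpr ⟨hze, hzf⟩)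

lemma isGluingVertex_of_min_of_max (h : OneSperner E) (hm : m ∈ E)
    (hmin : ∀ f ∈ E, m.card ≤ f.card) (hg : g ∈ E) (hmax : ∀ e ∈ E, e ≠ m → e.card ≤ g.card)
    (hzm : z ∈ m) (hzg : z ∉ g) : IsGluingVertex E z := by
  intro e he f hf hze hzf
  have hmf : m \ {z} ⊆ f := h.sdiff_singleton_subset_of_card_le hm hf hzm hzf (hmin f hf)
  by_cases hem : e = m
  · exact hem ▸ hmf
  have heg : e \ {z} ⊆ g :=
    h.sdiff_singleton_subset_of_card_le he hg hze hzg (hmax e he hem)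
  have hmg : m \ {z} ⊆ g := h.sdiff_singleton_subset_of_card_le hm hg hzm hzg (hmin g hg)
  obtain ⟨x, hxm, hxe⟩ : ∃ x ∈ m, x ∉ e :=
    not_subset.mp fun hme => hem (h.eq_of_subset hm he hme).symm
  have hxz : x ∈ m \ {z} :=
    mem_sdiff.mpr ⟨hxm, notMem_singleton.mpr (ne_of_mem_of_not_mem hze hxe).symm⟩
  rcases h.card_sdiff_eq_one_or he hf (by rintro rfl; exact hzf hze) with hef | hfe
  · exact sdiff_singleton_subset_of_card_sdiff_eq_one hef (mem_sdiff.mpr ⟨hze, hzf⟩)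
  -- `f` lies in `(e \ {z}) ∪ {x} ⊆ g`, so `f = g` by the antichain property
  have hfx : f \ {x} ⊆ e :=
    sdiff_singleton_subset_of_card_sdiff_eq_one hfe (mem_sdiff.mpr ⟨hmf hxz, hxe⟩)
  have hfg : f ⊆ g := by
    intro y hyf
    by_cases hyx : y = x
    · exact hyx ▸ hmg hxz
    · exact heg (mem_sdiff.mpr ⟨hfx (mem_sdiff.mpr ⟨hyf, notMem_singleton.mpr hyx⟩),
        notMem_singleton.mpr (ne_of_mem_of_not_mem hyf hzf)⟩)
  exact h.eq_of_subset hf hg hfg ▸ heg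

lemma exists_isGluingVertex {V : Finset α} (h : OneSperner E) (hE : ∀ e ∈ E, e ⊆ V)
    (hV : V.Nonempty) : ∃ z ∈ V, IsGluingVertex E z := by
  rcases (E : Set (Finset α)).subsingleton_or_nontrivial with hsub | hnt
  · obtain ⟨z, hz⟩ := hV
    exact ⟨z, hz, isGluingVertex_of_subsingleton hsub z⟩
  obtain ⟨m, hm, hmin⟩ := E.exists_min_image card hnt.nonempty
  obtain ⟨g, hg, hmax⟩ :=
    (E.erase m).exists_max_image card (Finset.Nontrivial.erase_nonempty hnt)
  obtain ⟨hgm, hgE⟩ := mem_erase.mp hg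
  obtain ⟨z, hzm, hzg⟩ : ∃ z ∈ m, z ∉ g :=
    not_subset.mp fun hmg => hgm (h.eq_of_subset hm hgE hmg).symm
  exact ⟨z, hE m hm hzm, h.isGluingVertex_of_min_of_max hm hmin hgE
    (fun e he hem => hmax e (mem_erase.mpr ⟨hem, he⟩)) hzm hzg⟩

end OneSperner

lemma IsGluingVertex.exists_decomposition {V : Finset α} {E : Finset (Finset α)} {z : α}
    (hz : IsGluingVertex E z) (h : OneSperner E) (hE : ∀ e ∈ E, e ⊆ V) (hzV : z ∈ V) :
    ∃ V1 V2 : Finset α, ∃ E1 E2 : Finset (Finset α),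
      Disjoint V1 V2 ∧ z ∉ V1 ∪ V2 ∧ V = insert z (V1 ∪ V2) ∧
      (∀ e ∈ E1, e ⊆ V1) ∧ (∀ e ∈ E2, e ⊆ V2) ∧
      OneSperner E1 ∧ OneSperner E2 ∧ E = glueEdges z V1 E1 E2 := by
  set P := E.filter (z ∈ ·)
  set N := E.filter (z ∉ ·)
  set E1 := P.image (· \ {z})
  set V1 := E1.sup id
  have hzP : ∀ e ∈ P, {z} ⊆ e := fun e he => singleton_subset_iff.mpr (mem_filter.mp he).2
  have hV1N : ∀ f ∈ N, V1 ⊆ f := fun f hf => Finset.sup_le <| forall_mem_image.mpr fun e he =>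
    hz e (mem_filter.mp he).1 f (mem_filter.mp hf).1 (mem_filter.mp he).2 (mem_filter.mp hf).2
  have hV1V : V1 ⊆ V := Finset.sup_le <| forall_mem_image.mpr fun e he =>
    sdiff_subset.trans (hE e (mem_filter.mp he).1)
  have hzV1 : z ∉ V1 := by simp [V1, E1]
  refine ⟨V1, V \ insert z V1, E1, N.image (· \ V1),
    disjoint_sdiff.mono_left (subset_insert z V1), by simp [hzV1], ?_,
    fun e he => le_sup (f := id) he, ?_, (h.mono (filter_subset _ _)).image_sdiff hzP,
    (h.mono (filter_subset _ _)).image_sdiff hV1N, ?_⟩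
  · rw [← insert_union, union_sdiff_of_subset (insert_subset hzV hV1V)]
  · refine forall_mem_image.mpr fun f hf x hx => ?_
    obtain ⟨hfE, hzf⟩ := mem_filter.mp hf
    obtain ⟨hxf, hxV1⟩ := mem_sdiff.mp hx
    exact mem_sdiff.mpr ⟨hE f hfE hxf, by simp [hxV1, ne_of_mem_of_not_mem hxf hzf]⟩
  · simp_rw [glueEdges, insert_eq]
    rw [image_union_image_sdiff hzP, image_union_image_sdiff hV1N, filter_union_filter_not_eq]

end

theorem stmt_7 {α : Type*} [DecidableEq α] (V : Finset α) (E : Finset (Finset α))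
    (hE : ∀ e ∈ E, e ⊆ V) (h : OneSperner E) (hV : V.Nonempty) :
    ∃ z ∈ V, ∃ V1 V2 : Finset α, ∃ E1 E2 : Finset (Finset α),
      Disjoint V1 V2 ∧ z ∉ V1 ∪ V2 ∧ V = insert z (V1 ∪ V2) ∧
      (∀ e ∈ E1, e ⊆ V1) ∧ (∀ e ∈ E2, e ⊆ V2) ∧
      OneSperner E1 ∧ OneSperner E2 ∧ E = glueEdges z V1 E1 E2 := by
  obtain ⟨z, hzV, hz⟩ := h.exists_isGluingVertex hE hV
  exact ⟨z, hzV, hz.exists_decomposition h hE hzV⟩
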